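/- Let V be a type with a colouring c : V → Fin 3, and call a finite subset of V an error if it contains exactly one vertex of each of the three colours. Then for every finite set E of errors and every colour k ∈ Fin 3, the number of vertices of colour k in the syndrome S(E) is congruent to |E| modulo 2; hence the three colour counts of S(E) all have the same parity. -/
import Mathlib


variable {V : Type*} [DecidableEq V]

/-- With respect to a colouring `c : V → Fin 3`, a finite subset of `V` is an error if it
contains exactly one vertex of each of the three colours. -/
def IsError (c : V → Fin 3) (e : Finset V) : Prop :=
  ∀ k : Fin 3, (e.filter fun v => c v = k).card = 1

/-- The syndrome of a finite set `E` of finite subsets of `V`: the vertices lying in an odd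
number of members of `E`. -/
def syndrome (E : Finset (Finset V)) : Finset V :=
  (E.sup id).filter fun v => Odd (E.filter fun f => v ∈ f).card

lemma natCast_zmod2 (n : ℕ) : (n : ZMod 2) = if Odd n then 1 else 0 := by
  rcases Nat.even_or_odd n with h | h
  · rw [Nat.even_iff] at h
    rw [← ZMod.natCast_mod, h]
    simp [Nat.not_odd_iff_even.mpr (Nat.even_iff.mpr h)]
  · rw [Nat.odd_iff] at h
    rw [← ZMod.natCast_mod, h]
    simp [Nat.odd_iff.mpr h]

/-- If every member of `E` is an error (one vertex of each colour), then for
every colour `k` the number of colour-`k` vertices of the syndrome is congruent to `|E|`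
modulo 2; hence the three colour counts of the syndrome all have the same parity. -/
theorem syndrome_colour_count_parity_abstract
    (c : V → Fin 3) (E : Finset (Finset V)) (hE : ∀ e ∈ E, IsError c e) :
    (∀ k : Fin 3,
      ((syndrome E).filter fun v => c v = k).card ≡ E.card [MOD 2]) ∧
    (∀ k₁ k₂ : Fin 3,
      ((syndrome E).filter fun v => c v = k₁).card ≡
        ((syndrome E).filter fun v => c v = k₂).card [MOD 2]) := by
  have key : ∀ k : Fin 3,
      ((syndrome E).filter fun v => c v = k).card ≡ E.card [MOD 2] := by
    intro k
    set T : Finset V := (E.sup id).filter fun v => c v = k with hT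
    have hfilter : (syndrome E).filter (fun v => c v = k)
        = T.filter fun v => Odd (E.filter fun f => v ∈ f).card := by
      simp only [syndrome, hT, Finset.filter_filter]
      apply Finset.filter_congr
      intro v _
      tauto
    -- the sum of multiplicities over T equals E.card
    have hsum : ∑ v ∈ T, (E.filter fun f => v ∈ f).card = E.card := by
      have : ∑ v ∈ T, (E.filter fun f => v ∈ f).card
          = ∑ v ∈ T, ∑ e ∈ E, if v ∈ e then 1 else 0 := by
        exact Finset.sum_congr rfl fun v _ => Finset.card_filter _ _
      rw [this, Finset.sum_comm]
      have hone : ∀ e ∈ E, (∑ v ∈ T, if v ∈ e then 1 else 0) = 1 := by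
        intro e he
        rw [← Finset.card_filter]
        have : T.filter (fun v => v ∈ e) = e.filter fun v => c v = k := by
          ext v
          simp only [hT, Finset.mem_filter]
          constructor
          · tauto
          · rintro ⟨hv, hc⟩
            exact ⟨⟨Finset.le_sup (f := id) he hv, hc⟩, hv⟩
        rw [this, hE e he k]
      rw [Finset.sum_congr rfl hone, Finset.sum_const, smul_eq_mul, mul_one]
    rw [← ZMod.natCast_eq_natCast_iff]
    calc (((syndrome E).filter fun v => c v = k).card : ZMod 2)
        = ∑ v ∈ T, if Odd (E.filter fun f => v ∈ f).card then (1 : ZMod 2) else 0 := by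
          rw [hfilter, Finset.sum_boole]
      _ = ∑ v ∈ T, (((E.filter fun f => v ∈ f).card : ℕ) : ZMod 2) := by
          refine Finset.sum_congr rfl fun v _ => ?_
          rw [natCast_zmod2]
      _ = ((∑ v ∈ T, (E.filter fun f => v ∈ f).card : ℕ) : ZMod 2) := by
          rw [Nat.cast_sum]
      _ = (E.card : ZMod 2) := by rw [hsum]
  exact ⟨key, fun k₁ k₂ => (key k₁).trans (key k₂).symm⟩
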